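/- Bounded packing of a subgroup is independent of the choice of left-invariant proper metric: if d and d' are two left-invariant proper metrics on a countable group G and a subgroup H ≤ G has bounded packing in G with respect to d, then H has bounded packing in G with respect to d'. -/

import Mathlib

/-!
Bounded packing is governed by the finiteness of balls: since `d'`-balls are finite, `d` is
bounded on each of them, so cosets at `d'`-distance at most `D` are at `d`-distance at most some
`C` depending only on `D`, and the packing constant of `d` for `C` works for `d'` and `D`.
-/

open scoped Pointwise

/-- The distance between two subsets of `G` induced by a metric `d`:
`inf { d x y : x ∈ A, y ∈ B }`. -/
noncomputable def cosetDist {G : Type*} (d : G → G → ℝ) (A B : Set G) : ℝ :=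
  sInf {r : ℝ | ∃ x ∈ A, ∃ y ∈ B, d x y = r}

section

variable {G : Type*}

lemma nonneg_of_refl_of_symm_of_triangle (d : G → G → ℝ) (refl : ∀ x, d x x = 0)
    (symm : ∀ x y, d x y = d y x) (triangle : ∀ x y z, d x z ≤ d x y + d y z) (x y : G) :
    0 ≤ d x y := by
  have := triangle x y x
  rw [refl, symm y x] at this
  linarith

lemma cosetDist_le_of_mem {d : G → G → ℝ} (nonneg : ∀ x y, 0 ≤ d x y) {A B : Set G}
    {x y : G} (hx : x ∈ A) (hy : y ∈ B) : cosetDist d A B ≤ d x y :=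
  csInf_le ⟨0, by rintro _ ⟨x, -, y, -, rfl⟩; exact nonneg x y⟩ ⟨x, hx, y, hy, rfl⟩

lemma exists_lt_of_cosetDist_lt {d : G → G → ℝ} {A B : Set G} (hA : A.Nonempty)
    (hB : B.Nonempty) {r : ℝ} (h : cosetDist d A B < r) : ∃ x ∈ A, ∃ y ∈ B, d x y < r := by
  obtain ⟨x₀, hx₀⟩ := hA
  obtain ⟨y₀, hy₀⟩ := hB
  have hne : {r : ℝ | ∃ x ∈ A, ∃ y ∈ B, d x y = r}.Nonempty := ⟨d x₀ y₀, x₀, hx₀, y₀, hy₀, rfl⟩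
  obtain ⟨_, ⟨x, hx, y, hy, rfl⟩, hlt⟩ := exists_lt_of_csInf_lt hne h
  exact ⟨x, hx, y, hy, hlt⟩

variable [Group G]

lemma apply_one_inv_mul_of_leftInvariant {d : G → G → ℝ}
    (leftInvariant : ∀ g x y : G, d (g * x) (g * y) = d x y) (x y : G) :
    d 1 (x⁻¹ * y) = d x y := by
  simpa using (leftInvariant x 1 (x⁻¹ * y)).symm

lemma exists_cosetDist_le_of_cosetDist_lt {d d' : G → G → ℝ} (d_nonneg : ∀ x y, 0 ≤ d x y)
    (d_leftInvariant : ∀ g x y : G, d (g * x) (g * y) = d x y)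
    (d'_leftInvariant : ∀ g x y : G, d' (g * x) (g * y) = d' x y)
    {R : ℝ} (ball_finite : {g : G | d' 1 g ≤ R}.Finite) :
    ∃ C : ℝ, ∀ A B : Set G, A.Nonempty → B.Nonempty →
      cosetDist d' A B < R → cosetDist d A B ≤ C := by
  obtain ⟨C, hC⟩ := (ball_finite.image (d 1)).bddAbove
  refine ⟨C, fun A B hA hB hAB => ?_⟩
  obtain ⟨x, hx, y, hy, hxy⟩ := exists_lt_of_cosetDist_lt hA hB hAB
  have hball : d' 1 (x⁻¹ * y) ≤ R :=
    (apply_one_inv_mul_of_leftInvariant d'_leftInvariant x y).trans_le hxy.le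
  calc cosetDist d A B ≤ d x y := cosetDist_le_of_mem d_nonneg hx hy
    _ = d 1 (x⁻¹ * y) := (apply_one_inv_mul_of_leftInvariant d_leftInvariant x y).symm
    _ ≤ C := hC ⟨_, hball, rfl⟩

end

theorem bounded_packing_independent_of_metric_general
    {G : Type*} [Group G]
    (d d' : G → G → ℝ)
    (d_self : ∀ x y : G, d x y = 0 ↔ x = y)
    (d_symm : ∀ x y : G, d x y = d y x)
    (d_triangle : ∀ x y z : G, d x z ≤ d x y + d y z)
    (d_leftInvariant : ∀ g x y : G, d (g * x) (g * y) = d x y)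
    (d'_leftInvariant : ∀ g x y : G, d' (g * x) (g * y) = d' x y)
    (d'_proper : ∀ R : ℝ, 0 < R → {g : G | d' 1 g ≤ R}.Finite)
    (H : Subgroup G)
    (h_packing : ∀ D : ℝ, 0 < D → ∃ N : ℕ,
      ∀ 𝒞 : Set (Set G),
        (∀ A ∈ 𝒞, ∃ g : G, A = g • (H : Set G)) →
        (∀ A ∈ 𝒞, ∀ B ∈ 𝒞, cosetDist d A B ≤ D) →
        𝒞.Finite ∧ 𝒞.ncard ≤ N) :
    ∀ D : ℝ, 0 < D → ∃ N : ℕ,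
      ∀ 𝒞 : Set (Set G),
        (∀ A ∈ 𝒞, ∃ g : G, A = g • (H : Set G)) →
        (∀ A ∈ 𝒞, ∀ B ∈ 𝒞, cosetDist d' A B ≤ D) →
        𝒞.Finite ∧ 𝒞.ncard ≤ N := by
  intro D hD
  have d_nonneg := nonneg_of_refl_of_symm_of_triangle d (fun x => (d_self x x).2 rfl)
    d_symm d_triangle
  obtain ⟨C, hC⟩ := exists_cosetDist_le_of_cosetDist_lt d_nonneg d_leftInvariant
    d'_leftInvariant (d'_proper (D + 1) (by linarith))
  obtain ⟨N, hN⟩ := h_packing (max C 1) (lt_max_of_lt_right one_pos)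
  have coset_nonempty : ∀ A : Set G, (∃ g : G, A = g • (H : Set G)) → A.Nonempty := by
    rintro _ ⟨g, rfl⟩
    exact ⟨g, 1, H.one_mem, mul_one g⟩
  refine ⟨N, fun 𝒞 hcoset hdist => hN 𝒞 hcoset fun A hA B hB => ?_⟩
  exact (hC A B (coset_nonempty A (hcoset A hA)) (coset_nonempty B (hcoset B hB))
    ((hdist A hA B hB).trans_lt (lt_add_one D))).trans (le_max_left C 1)

/-- Bounded packing is independent of the choice of left-invariant proper metric:
if a subgroup `H` of a countable group `G` has bounded packing with respect to a
left-invariant proper metric `d`, then it has bounded packing with respect to any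
other left-invariant proper metric `d'`. -/
theorem bounded_packing_independent_of_metric
    {G : Type*} [Group G] [Countable G]
    (d d' : G → G → ℝ)
    (d_self : ∀ x y : G, d x y = 0 ↔ x = y)
    (d_symm : ∀ x y : G, d x y = d y x)
    (d_triangle : ∀ x y z : G, d x z ≤ d x y + d y z)
    (d_leftInvariant : ∀ g x y : G, d (g * x) (g * y) = d x y)
    (d_proper : ∀ R : ℝ, 0 < R → {g : G | d 1 g ≤ R}.Finite)
    (d'_self : ∀ x y : G, d' x y = 0 ↔ x = y)
    (d'_symm : ∀ x y : G, d' x y = d' y x)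
    (d'_triangle : ∀ x y z : G, d' x z ≤ d' x y + d' y z)
    (d'_leftInvariant : ∀ g x y : G, d' (g * x) (g * y) = d' x y)
    (d'_proper : ∀ R : ℝ, 0 < R → {g : G | d' 1 g ≤ R}.Finite)
    (H : Subgroup G)
    (h_packing : ∀ D : ℝ, 0 < D → ∃ N : ℕ,
      ∀ 𝒞 : Set (Set G),
        (∀ A ∈ 𝒞, ∃ g : G, A = g • (H : Set G)) →
        (∀ A ∈ 𝒞, ∀ B ∈ 𝒞, cosetDist d A B ≤ D) →
        𝒞.Finite ∧ 𝒞.ncard ≤ N) :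
    ∀ D : ℝ, 0 < D → ∃ N : ℕ,
      ∀ 𝒞 : Set (Set G),
        (∀ A ∈ 𝒞, ∃ g : G, A = g • (H : Set G)) →
        (∀ A ∈ 𝒞, ∀ B ∈ 𝒞, cosetDist d' A B ≤ D) →
        𝒞.Finite ∧ 𝒞.ncard ≤ N :=
  bounded_packing_independent_of_metric_general d d' d_self d_symm d_triangle d_leftInvariant
    d'_leftInvariant d'_proper H h_packing
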